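/- The explicit operators K₁ = e^{2πb u}, H = −2i b⁻¹ u, E-part operator 𝓔 = q^{-1/2} e^{πbν+πbu} e^{−ib∂_u} + q^{1/2} e^{−πbν−πbu} e^{−ib∂_u}, and 𝓕 = q^{-1/2} e^{πbν−πbu} e^{ib∂_u} + q^{1/2} e^{−πbν+πbu} e^{ib∂_u}, with q = e^{πi b²}, satisfy the U_q(sl₂) relations: K𝓔 = q²𝓔K, K𝓕 = q⁻²𝓕K, and [E,F] = (K − K⁻¹)/(q − q⁻¹), where 𝓔 = −i(q−q⁻¹)E, 𝓕 = −i(q−q⁻¹)F. -/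

import Mathlib

/-!
Conjugation by `d^{±1}`, `d = e^{ib∂_u}`, fixes `v = e^{πbν}` and rescales `u = e^{πbu}` by
`q^{±1}`. Hence `K = u²` commutes with the Laurent monomials in `u, v` and `q^{±2}`-commutes with
`d^{∓1}`, which gives the first two relations. For the third, write `𝓔 = P d⁻¹` and `𝓕 = Q d`;
then `𝓔𝓕 = P (d⁻¹ Q d)` and `𝓕𝓔 = Q (d P d⁻¹)` are products of commuting Laurent polynomials
in `u, v`, which agree except in their `K` and `K⁻¹` terms: `𝓔𝓕 - 𝓕𝓔 = -(q - q⁻¹)(K - K⁻¹)`.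
Dividing by `(-i(q - q⁻¹))² = -(q - q⁻¹)²` gives `[E, F]`.
-/

section

variable {R A : Type*}

def QCommute [Mul A] [SMul R A] (c : R) (a b : A) : Prop := a * b = c • (b * a)

namespace QCommute

section Semiring

variable [CommSemiring R] [Semiring A] [Algebra R A] {a a' b b' : A} {c c' : R}

theorem of_commute (h : Commute a b) : QCommute (1 : R) a b := by
  rw [QCommute, one_smul, h.eq]

theorem mul_left (h : QCommute c a b) (h' : QCommute c' a' b) :
    QCommute (c * c') (a * a') b := by
  unfold QCommute at *
  rw [mul_assoc, h', mul_smul_comm, ← mul_assoc, h, smul_mul_assoc, smul_smul, mul_comm c',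
    mul_assoc]

theorem mul_right (h : QCommute c a b) (h' : QCommute c' a b') :
    QCommute (c * c') a (b * b') := by
  unfold QCommute at *
  rw [← mul_assoc, h, smul_mul_assoc, mul_assoc, h', mul_smul_comm, smul_smul, mul_assoc]

theorem conj_eq_smul (h : QCommute c a b) (ha : a * a' = 1) : a * b * a' = c • b := by
  rw [h, smul_mul_assoc, mul_assoc, ha, mul_one]

theorem conj_smul_add_smul (h : QCommute c a b) (h' : QCommute c' a b') (ha : a * a' = 1)
    (t t' : R) : a * (t • b + t' • b') * a' = (c * t) • b + (c' * t') • b' := by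
  rw [mul_add, add_mul, mul_smul_comm, mul_smul_comm, smul_mul_assoc, smul_mul_assoc,
    h.conj_eq_smul ha, h'.conj_eq_smul ha, smul_smul, smul_smul, mul_comm t, mul_comm t']

end Semiring

section Field

variable [Field R] [Semiring A] [Algebra R A] {a b : A} {c : R}

theorem symm (h : QCommute c a b) (hc : c ≠ 0) : QCommute c⁻¹ b a := by
  rw [QCommute, h, smul_smul, inv_mul_cancel₀ hc, one_smul]

theorem units_inv_right {u : Aˣ} (h : QCommute c a u) (hc : c ≠ 0) :
    QCommute c⁻¹ a ↑u⁻¹ := by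
  have h' : (u : A) * a = c⁻¹ • (a * u) := h.symm hc
  calc a * ↑u⁻¹ = ↑u⁻¹ * (u * a) * ↑u⁻¹ := by simp [← mul_assoc]
    _ = c⁻¹ • (↑u⁻¹ * a) := by rw [h', mul_smul_comm, smul_mul_assoc]; simp [mul_assoc]

theorem units_inv_left {u : Aˣ} (h : QCommute c (u : A) b) (hc : c ≠ 0) :
    QCommute c⁻¹ (↑u⁻¹ : A) b := by
  have h' : QCommute c b ↑u⁻¹ :=
    calc b * ↑u⁻¹ = ↑u⁻¹ * (u * b) * ↑u⁻¹ := by simp [← mul_assoc]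
      _ = c • (↑u⁻¹ * b) := by rw [h, mul_smul_comm, smul_mul_assoc]; simp [mul_assoc]
  exact h'.symm hc

theorem units_conj_smul_add_smul {u v d : Aˣ} (hdu : QCommute c (d : A) u)
    (hvd : Commute (v : A) d) (hc : c ≠ 0) (x y : R) :
    ↑d * (x • (↑v * ↑u) + y • (↑v⁻¹ * ↑u⁻¹)) * ↑d⁻¹ =
      (c * x) • (↑v * ↑u) + (c⁻¹ * y) • (↑v⁻¹ * ↑u⁻¹ : A) := by
  have h₁ : QCommute c (d : A) (↑v * ↑u) := by
    simpa using (of_commute hvd.symm).mul_right hdu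
  have h₂ : QCommute c⁻¹ (d : A) (↑v⁻¹ * ↑u⁻¹) := by
    simpa using (of_commute hvd.symm.units_inv_right).mul_right (hdu.units_inv_right hc)
  exact h₁.conj_smul_add_smul h₂ d.mul_inv x y

end Field

end QCommute

theorem Commute.units_binomial_mul_binomial [CommSemiring R] [Semiring A] [Algebra R A]
    {a b : Aˣ} (hab : Commute (a : A) b) (x y z w : R) :
    (x • (↑a * ↑b) + y • (↑a⁻¹ * ↑b⁻¹ : A)) * (z • (↑a * ↑b⁻¹) + w • (↑a⁻¹ * ↑b)) =
      (x * z) • (↑a * ↑a) + (x * w) • (↑b * ↑b) + (y * z) • (↑b⁻¹ * ↑b⁻¹) +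
        (y * w) • (↑a⁻¹ * ↑a⁻¹ : A) := by
  have h₁ : (a * b * (a * ↑b⁻¹) : A) = a * a := by
    rw [hab.symm.mul_mul_mul_comm, Units.mul_inv, mul_one]
  have h₂ : (a * b * (↑a⁻¹ * b) : A) = b * b := by
    rw [hab.symm.units_inv_right.mul_mul_mul_comm, Units.mul_inv, one_mul]
  have h₃ : (↑a⁻¹ * ↑b⁻¹ * (a * ↑b⁻¹) : A) = ↑b⁻¹ * ↑b⁻¹ := by
    rw [hab.symm.units_inv_left.mul_mul_mul_comm, Units.inv_mul, one_mul]
  have h₄ : (↑a⁻¹ * ↑b⁻¹ * (↑a⁻¹ * b) : A) = ↑a⁻¹ * ↑a⁻¹ := by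
    rw [hab.symm.units_inv_left.units_inv_right.mul_mul_mul_comm, Units.inv_mul, mul_one]
  simp only [add_mul, mul_add, smul_mul_smul_comm, h₁, h₂, h₃, h₄]
  abel

theorem Commute.units_smul_mul_add_smul_inv_mul_inv [CommSemiring R] [Semiring A] [Algebra R A]
    {u v : Aˣ} (hvu : Commute (v : A) u) (x y : R) :
    Commute (u : A) (x • (↑v * ↑u) + y • (↑v⁻¹ * ↑u⁻¹)) :=
  ((hvu.symm.mul_right (Commute.refl _)).smul_right x).add_right
    ((hvu.symm.units_inv_right.mul_right (Commute.refl _).units_inv_right).smul_right y)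

section Sl2

variable [Field R] [Semiring A] [Algebra R A] {q r : R} {u v d : Aˣ}

/-- With `u = e^{πbu}`, `v = e^{πbν}`, `d = e^{ib∂_u}` and `r = q^{1/2}`, `sl2E` and `sl2F` are the
operators `𝓔` and `𝓕`. -/
def sl2E (r : R) (u v d : Aˣ) : A := r⁻¹ • (↑v * ↑u * ↑d⁻¹) + r • (↑v⁻¹ * ↑u⁻¹ * ↑d⁻¹)

def sl2F (r : R) (u v d : Aˣ) : A := r⁻¹ • (↑v * ↑u⁻¹ * ↑d) + r • (↑v⁻¹ * ↑u * ↑d)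

theorem sl2E_eq_mul (r : R) (u v d : Aˣ) :
    sl2E r u v d = (r⁻¹ • (↑v * ↑u) + r • (↑v⁻¹ * ↑u⁻¹)) * (↑d⁻¹ : A) := by
  simp only [sl2E, add_mul, smul_mul_assoc]

theorem sl2F_eq_mul (r : R) (u v d : Aˣ) :
    sl2F r u v d = (r⁻¹ • (↑v * ↑u⁻¹) + r • (↑v⁻¹ * ↑u)) * (d : A) := by
  simp only [sl2F, add_mul, smul_mul_assoc]

theorem qcommute_sq_sl2E (hdu : QCommute q (d : A) u) (hvu : Commute (v : A) u) (hq : q ≠ 0)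
    (r : R) : QCommute (q ^ 2) (↑u * ↑u : A) (sl2E r u v d) := by
  have hud : QCommute q (u : A) ↑d⁻¹ := by
    simpa using (hdu.units_inv_left hq).symm (inv_ne_zero hq)
  have hP := hvu.units_smul_mul_add_smul_inv_mul_inv r⁻¹ r
  rw [sl2E_eq_mul]
  simpa [sq] using (QCommute.of_commute (hP.mul_left hP)).mul_right (hud.mul_left hud)

theorem qcommute_sq_inv_sl2F (hdu : QCommute q (d : A) u) (hvu : Commute (v : A) u)
    (hq : q ≠ 0) (r : R) : QCommute (q ^ 2)⁻¹ (↑u * ↑u : A) (sl2F r u v d) := by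
  have hud : QCommute q⁻¹ (u : A) d := hdu.symm hq
  have hQ := (hvu.units_inv_right.units_smul_mul_add_smul_inv_mul_inv r⁻¹ r).units_inv_left
  simp only [inv_inv] at hQ
  rw [sl2F_eq_mul]
  simpa [sq] using (QCommute.of_commute (hQ.mul_left hQ)).mul_right (hud.mul_left hud)

theorem sl2E_mul_sl2F (hdu : QCommute q (d : A) u) (hvu : Commute (v : A) u)
    (hvd : Commute (v : A) d) (hr : r ^ 2 = q) (hr0 : r ≠ 0) :
    sl2E r u v d * sl2F r u v d =
      ↑v * ↑v + ↑v⁻¹ * ↑v⁻¹ + q⁻¹ • (↑u * ↑u) + q • (↑u⁻¹ * ↑u⁻¹ : A) := by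
  subst hr
  have hq : r ^ 2 ≠ 0 := pow_ne_zero 2 hr0
  have hdu' : QCommute (r ^ 2) (↑d⁻¹ : A) ↑u⁻¹ := by
    simpa using (hdu.units_inv_left hq).units_inv_right (inv_ne_zero hq)
  have hconj := hdu'.units_conj_smul_add_smul hvd.units_inv_right hq r⁻¹ r
  simp only [inv_inv] at hconj
  rw [sl2E_eq_mul, sl2F_eq_mul, mul_assoc, ← mul_assoc _ _ (d : A), hconj,
    hvu.units_binomial_mul_binomial]
  match_scalars <;> field_simp

theorem sl2F_mul_sl2E (hdu : QCommute q (d : A) u) (hvu : Commute (v : A) u)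
    (hvd : Commute (v : A) d) (hr : r ^ 2 = q) (hr0 : r ≠ 0) :
    sl2F r u v d * sl2E r u v d =
      ↑v * ↑v + ↑v⁻¹ * ↑v⁻¹ + q • (↑u * ↑u) + q⁻¹ • (↑u⁻¹ * ↑u⁻¹ : A) := by
  subst hr
  have hq : r ^ 2 ≠ 0 := pow_ne_zero 2 hr0
  have hexpand :=
    hvu.units_inv_right.units_binomial_mul_binomial r⁻¹ r (r ^ 2 * r⁻¹) ((r ^ 2)⁻¹ * r)
  simp only [inv_inv] at hexpand
  rw [sl2E_eq_mul, sl2F_eq_mul, mul_assoc, ← mul_assoc _ _ (↑d⁻¹ : A),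
    hdu.units_conj_smul_add_smul hvd hq, hexpand]
  match_scalars <;> field_simp

end Sl2

end

/-- The explicit operators
`K = e^{2πbu}`, `𝓔 = q^{-1/2} e^{πbν+πbu} e^{−ib∂_u} + q^{1/2} e^{−πbν−πbu} e^{−ib∂_u}`,
`𝓕 = q^{-1/2} e^{πbν−πbu} e^{ib∂_u} + q^{1/2} e^{−πbν+πbu} e^{ib∂_u}`
satisfy the `U_q(sl₂)` relations `K𝓔 = q²𝓔K`, `K𝓕 = q⁻²𝓕K` and
`EF − FE = (K − K⁻¹)/(q − q⁻¹)`, where `𝓔 = −i(q−q⁻¹)E`, `𝓕 = −i(q−q⁻¹)F`.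
We work in the algebra generated by `Eu = e^{πbu}`, `Ev = e^{πbν}`, `D = e^{ib∂_u}`
and their inverses, with the relation `D·Eu = q·Eu·D` coming from `[u,∂_u] = −1`,
`Ev` central, and `r` a square root of `q`. -/
theorem uq_sl2_relations_explicit
    (𝔸 : Type*) [Ring 𝔸] [Algebra ℂ 𝔸]
    (q r : ℂ) (hq : q ≠ 0) (hq1 : q - q⁻¹ ≠ 0) (hr : r ^ 2 = q) (hr0 : r ≠ 0)
    (Eu EuI Ev EvI D DI : 𝔸)
    (hEu : Eu * EuI = 1) (hEu' : EuI * Eu = 1)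
    (hEv : Ev * EvI = 1) (hEv' : EvI * Ev = 1)
    (hD : D * DI = 1) (hD' : DI * D = 1)
    (hDEu : D * Eu = q • (Eu * D))
    (hEvEu : Commute Ev Eu) (hEvD : Commute Ev D)
    -- names for the operators
    (K KI 𝓔 𝓕 E F : 𝔸)
    (hK : K = Eu * Eu) (hKI : KI = EuI * EuI)
    (h𝓔 : 𝓔 = r⁻¹ • (Ev * Eu * DI) + r • (EvI * EuI * DI))
    (h𝓕 : 𝓕 = r⁻¹ • (Ev * EuI * D) + r • (EvI * Eu * D))
    (hE : 𝓔 = (-Complex.I * (q - q⁻¹)) • E)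
    (hF : 𝓕 = (-Complex.I * (q - q⁻¹)) • F) :
    K * 𝓔 = (q ^ 2) • (𝓔 * K) ∧
    K * 𝓕 = (q ^ 2)⁻¹ • (𝓕 * K) ∧
    E * F - F * E = (q - q⁻¹)⁻¹ • (K - KI) := by
  obtain ⟨u, rfl, rfl⟩ : ∃ u : 𝔸ˣ, ↑u = Eu ∧ ↑u⁻¹ = EuI := ⟨⟨Eu, EuI, hEu, hEu'⟩, rfl, rfl⟩
  obtain ⟨v, rfl, rfl⟩ : ∃ v : 𝔸ˣ, ↑v = Ev ∧ ↑v⁻¹ = EvI := ⟨⟨Ev, EvI, hEv, hEv'⟩, rfl, rfl⟩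
  obtain ⟨d, rfl, rfl⟩ : ∃ d : 𝔸ˣ, ↑d = D ∧ ↑d⁻¹ = DI := ⟨⟨D, DI, hD, hD'⟩, rfl, rfl⟩
  replace h𝓔 : 𝓔 = sl2E r u v d := h𝓔
  replace h𝓕 : 𝓕 = sl2F r u v d := h𝓕
  subst hK hKI
  refine ⟨h𝓔 ▸ qcommute_sq_sl2E hDEu hEvEu hq r, h𝓕 ▸ qcommute_sq_inv_sl2F hDEu hEvEu hq r, ?_⟩
  have hcomm : 𝓔 * 𝓕 - 𝓕 * 𝓔 = (-(q - q⁻¹)) • (↑u * ↑u - ↑u⁻¹ * ↑u⁻¹ : 𝔸) := by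
    rw [h𝓔, h𝓕, sl2E_mul_sl2F hDEu hEvEu hEvD hr hr0, sl2F_mul_sl2E hDEu hEvEu hEvD hr hr0]
    module
  have hcc : -Complex.I * (q - q⁻¹) * (-Complex.I * (q - q⁻¹)) = -(q - q⁻¹) ^ 2 := by
    ring_nf; rw [Complex.I_sq]; ring
  rw [hE, hF, smul_mul_smul_comm, smul_mul_smul_comm, ← smul_sub, hcc] at hcomm
  rw [← inv_smul_smul₀ (neg_ne_zero.2 (pow_ne_zero 2 hq1)) (E * F - F * E), hcomm, smul_smul,
    inv_neg, neg_mul_neg, sq, mul_inv, inv_mul_cancel_right₀ hq1]
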